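/- Confluence of completion: if Δ₁ ⟶ Ω and Δ₂ ⟶ Ω where Ω is a complete context, then [Ω]Δ₁ = [Ω]Δ₂. -/

import Mathlib

/-- Sorts κ ∈ {⋆, ℕ}. -/
inductive Srt : Type
  | star
  | nat
  deriving DecidableEq

/-- Algorithmic types and index terms, with named universal variables `var`
and existential variables `evar`. -/
inductive Ty : Type
  | unit
  | var (x : ℕ)
  | evar (a : ℕ)
  | zero
  | succ (t : Ty)
  | arrow (A B : Ty)
  | sum (A B : Ty)
  | prod (A B : Ty)
  | all (x : ℕ) (κ : Srt) (A : Ty)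
  | ex (x : ℕ) (κ : Srt) (A : Ty)
  | impl (t u : Ty) (A : Ty)
  | wth (A : Ty) (t u : Ty)
  deriving DecidableEq

namespace Ty

/-- Substitution `[τ/α]` for a universal variable. -/
def subst (τ : Ty) (α : ℕ) : Ty → Ty
  | unit => unit
  | var x => if x = α then τ else var x
  | evar a => evar a
  | zero => zero
  | succ t => succ (subst τ α t)
  | arrow A B => arrow (subst τ α A) (subst τ α B)
  | sum A B => sum (subst τ α A) (subst τ α B)
  | prod A B => prod (subst τ α A) (subst τ α B)
  | all x κ A => all x κ (if x = α then A else subst τ α A)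
  | ex x κ A => ex x κ (if x = α then A else subst τ α A)
  | impl t u A => impl (subst τ α t) (subst τ α u) (subst τ α A)
  | wth A t u => wth (subst τ α A) (subst τ α t) (subst τ α u)

/-- Substitution `[τ/α̂]` for an existential variable. -/
def substE (τ : Ty) (a : ℕ) : Ty → Ty
  | unit => unit
  | var x => var x
  | evar b => if b = a then τ else evar b
  | zero => zero
  | succ t => succ (substE τ a t)
  | arrow A B => arrow (substE τ a A) (substE τ a B)
  | sum A B => sum (substE τ a A) (substE τ a B)
  | prod A B => prod (substE τ a A) (substE τ a B)
  | all x κ A => all x κ (substE τ a A)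
  | ex x κ A => ex x κ (substE τ a A)
  | impl t u A => impl (substE τ a t) (substE τ a u) (substE τ a A)
  | wth A t u => wth (substE τ a A) (substE τ a t) (substE τ a u)

/-- The free existential variables of a type. -/
def fev : Ty → List ℕ
  | unit => []
  | var _ => []
  | evar a => [a]
  | zero => []
  | succ t => fev t
  | arrow A B => fev A ++ fev B
  | sum A B => fev A ++ fev B
  | prod A B => fev A ++ fev B
  | all _ _ A => fev A
  | ex _ _ A => fev A
  | impl t u A => fev t ++ fev u ++ fev A
  | wth A t u => fev A ++ fev t ++ fev u

end Ty

/-- Entries of an algorithmic context: universal variable declarations `α:κ`,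
term variable declarations `x:A`, unsolved existentials `α̂:κ`, solved
existentials `α̂:κ = τ`, equations `α = τ`, and markers `►α̂`. -/
inductive CtxEntry : Type
  | uvar (α : ℕ) (κ : Srt)
  | tvar (x : ℕ) (A : Ty)
  | evar (a : ℕ) (κ : Srt)
  | solved (a : ℕ) (κ : Srt) (τ : Ty)
  | eqn (α : ℕ) (τ : Ty)
  | marker (a : ℕ)
  deriving DecidableEq

/-- Algorithmic contexts, as lists whose head is the rightmost entry:
`Γ, e` is `e :: Γ` and `Γ₀, Γ₁` is `Γ₁ ++ Γ₀`. -/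
abbrev ACtx := List CtxEntry

/-- Context application `[Γ]t`: substitute solutions of solved existential
variables and equated universal variables, iteratively. -/
def applyCtx : ACtx → Ty → Ty
  | [], t => t
  | CtxEntry.solved a _ τ :: Γ, t => applyCtx Γ (Ty.substE τ a t)
  | CtxEntry.eqn α τ :: Γ, t => applyCtx Γ (Ty.subst τ α t)
  | CtxEntry.uvar _ _ :: Γ, t => applyCtx Γ t
  | CtxEntry.tvar _ _ :: Γ, t => applyCtx Γ t
  | CtxEntry.evar _ _ :: Γ, t => applyCtx Γ t
  | CtxEntry.marker _ :: Γ, t => applyCtx Γ t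

/-- Algorithmic sorting judgment `Γ ⊢ t : κ`. -/
inductive ASort : ACtx → Ty → Srt → Prop
  | var {Γ α κ} : CtxEntry.uvar α κ ∈ Γ → ASort Γ (Ty.var α) κ
  | evar {Γ a κ} : CtxEntry.evar a κ ∈ Γ → ASort Γ (Ty.evar a) κ
  | solvedEvar {Γ a κ τ} : CtxEntry.solved a κ τ ∈ Γ → ASort Γ (Ty.evar a) κ
  | unit {Γ} : ASort Γ Ty.unit Srt.star
  | zero {Γ} : ASort Γ Ty.zero Srt.nat
  | succ {Γ t} : ASort Γ t Srt.nat → ASort Γ (Ty.succ t) Srt.nat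
  | arrow {Γ A B} : ASort Γ A Srt.star → ASort Γ B Srt.star →
      ASort Γ (Ty.arrow A B) Srt.star
  | sum {Γ A B} : ASort Γ A Srt.star → ASort Γ B Srt.star →
      ASort Γ (Ty.sum A B) Srt.star
  | prod {Γ A B} : ASort Γ A Srt.star → ASort Γ B Srt.star →
      ASort Γ (Ty.prod A B) Srt.star

/-- Well-formedness `Γ ⊢ t = u prop` of propositions (equations over sort ℕ). -/
inductive APropWF : ACtx → Ty → Ty → Prop
  | eq {Γ t u} : ASort Γ t Srt.nat → ASort Γ u Srt.nat → APropWF Γ t u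

/-- Algorithmic type well-formedness `Γ ⊢ A type`. -/
inductive ATyWF : ACtx → Ty → Prop
  | var {Γ α} : CtxEntry.uvar α Srt.star ∈ Γ → ATyWF Γ (Ty.var α)
  | evar {Γ a} : CtxEntry.evar a Srt.star ∈ Γ → ATyWF Γ (Ty.evar a)
  | solvedEvar {Γ a τ} : CtxEntry.solved a Srt.star τ ∈ Γ → ATyWF Γ (Ty.evar a)
  | unit {Γ} : ATyWF Γ Ty.unit
  | arrow {Γ A B} : ATyWF Γ A → ATyWF Γ B → ATyWF Γ (Ty.arrow A B)
  | sum {Γ A B} : ATyWF Γ A → ATyWF Γ B → ATyWF Γ (Ty.sum A B)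
  | prod {Γ A B} : ATyWF Γ A → ATyWF Γ B → ATyWF Γ (Ty.prod A B)
  | all {Γ x κ A} : ATyWF (CtxEntry.uvar x κ :: Γ) A → ATyWF Γ (Ty.all x κ A)
  | ex {Γ x κ A} : ATyWF (CtxEntry.uvar x κ :: Γ) A → ATyWF Γ (Ty.ex x κ A)
  | impl {Γ t u A} : APropWF Γ t u → ATyWF Γ A → ATyWF Γ (Ty.impl t u A)
  | wth {Γ A t u} : ATyWF Γ A → APropWF Γ t u → ATyWF Γ (Ty.wth A t u)

/-- The variable(s) declared by a context entry (equations and markers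
declare nothing). -/
def declOf : CtxEntry → Option ℕ
  | CtxEntry.uvar α _ => some α
  | CtxEntry.tvar x _ => some x
  | CtxEntry.evar a _ => some a
  | CtxEntry.solved a _ _ => some a
  | CtxEntry.eqn _ _ => none
  | CtxEntry.marker _ => none

/-- The names occurring in a context entry (for freshness). -/
def entryNames : CtxEntry → List ℕ
  | CtxEntry.uvar α _ => [α]
  | CtxEntry.tvar x _ => [x]
  | CtxEntry.evar a _ => [a]
  | CtxEntry.solved a _ _ => [a]
  | CtxEntry.eqn _ _ => []
  | CtxEntry.marker a => [a]

/-- The domain of a context: all declared names. -/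
def dom : ACtx → List ℕ
  | [] => []
  | e :: Γ => entryNames e ++ dom Γ

/-- Γ contains an equation for the universal variable α. -/
def hasEqn (Γ : ACtx) (α : ℕ) : Prop :=
  ∃ τ, CtxEntry.eqn α τ ∈ Γ

/-- Context well-formedness `⊢ Γ ctx`. -/
inductive CtxWF : ACtx → Prop
  | nil : CtxWF []
  | uvar {Γ α κ} : CtxWF Γ → α ∉ dom Γ → CtxWF (CtxEntry.uvar α κ :: Γ)
  | tvar {Γ x A} : CtxWF Γ → x ∉ dom Γ → ATyWF Γ A → CtxWF (CtxEntry.tvar x A :: Γ)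
  | evar {Γ a κ} : CtxWF Γ → a ∉ dom Γ → CtxWF (CtxEntry.evar a κ :: Γ)
  | solved {Γ a κ τ} : CtxWF Γ → a ∉ dom Γ → ASort Γ τ κ →
      CtxWF (CtxEntry.solved a κ τ :: Γ)
  | eqn {Γ α κ τ} : CtxWF Γ → CtxEntry.uvar α κ ∈ Γ → ¬ hasEqn Γ α →
      ASort Γ τ κ → CtxWF (CtxEntry.eqn α τ :: Γ)
  | marker {Γ a} : CtxWF Γ → a ∉ dom Γ → CtxWF (CtxEntry.marker a :: Γ)

/-- Context extension `Γ ⟶ Δ`. -/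
inductive CtxExt : ACtx → ACtx → Prop
  | nil : CtxExt [] []
  | tvar {Γ Δ x A A'} : CtxExt Γ Δ → applyCtx Δ A = applyCtx Δ A' →
      CtxExt (CtxEntry.tvar x A :: Γ) (CtxEntry.tvar x A' :: Δ)
  | uvar {Γ Δ α κ} : CtxExt Γ Δ → CtxExt (CtxEntry.uvar α κ :: Γ) (CtxEntry.uvar α κ :: Δ)
  | evar {Γ Δ a κ} : CtxExt Γ Δ → CtxExt (CtxEntry.evar a κ :: Γ) (CtxEntry.evar a κ :: Δ)
  | solved {Γ Δ a κ t t'} : CtxExt Γ Δ → applyCtx Δ t = applyCtx Δ t' →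
      CtxExt (CtxEntry.solved a κ t :: Γ) (CtxEntry.solved a κ t' :: Δ)
  | solve {Γ Δ a κ t} : CtxExt Γ Δ →
      CtxExt (CtxEntry.evar a κ :: Γ) (CtxEntry.solved a κ t :: Δ)
  | eqn {Γ Δ α t t'} : CtxExt Γ Δ → applyCtx Δ t = applyCtx Δ t' →
      CtxExt (CtxEntry.eqn α t :: Γ) (CtxEntry.eqn α t' :: Δ)
  | marker {Γ Δ a} : CtxExt Γ Δ → CtxExt (CtxEntry.marker a :: Γ) (CtxEntry.marker a :: Δ)
  | add {Γ Δ a κ} : CtxExt Γ Δ → CtxExt Γ (CtxEntry.evar a κ :: Δ)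
  | addSolved {Γ Δ a κ t} : CtxExt Γ Δ → CtxExt Γ (CtxEntry.solved a κ t :: Δ)

/-- `u` is declared in `Γ`. -/
def DeclaredIn (Γ : ACtx) (u : ℕ) : Prop :=
  ∃ e ∈ Γ, declOf e = some u

/-- `u` is declared (strictly) to the left of `v` in `Γ`
(recall the head of the list is the rightmost entry). -/
def DeclaredLeftOf (Γ : ACtx) (u v : ℕ) : Prop :=
  ∃ (Γ₃ Γ₂ Γ₁ : ACtx) (e₂ e₁ : CtxEntry),
    Γ = Γ₃ ++ e₂ :: Γ₂ ++ e₁ :: Γ₁ ∧ declOf e₁ = some u ∧ declOf e₂ = some v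

/-- A complete context: every existential variable is solved. -/
def Complete (Ω : ACtx) : Prop :=
  ∀ (a : ℕ) (κ : Srt), CtxEntry.evar a κ ∉ Ω

/-- A soft context: only (solved or unsolved) existential declarations. -/
def Soft (Θ : ACtx) : Prop :=
  ∀ e ∈ Θ, (∃ a κ, e = CtxEntry.evar a κ) ∨ (∃ a κ τ, e = CtxEntry.solved a κ τ)

/-- Entries of declarative contexts. -/
inductive DEntry : Type
  | uvar (α : ℕ) (κ : Srt)
  | tvar (x : ℕ) (A : Ty)
  deriving DecidableEq

abbrev DCtx := List DEntry

/-- Substitution applied pointwise to a declarative context. -/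
def substDCtx (τ : Ty) (α : ℕ) : DCtx → DCtx :=
  List.map fun e =>
    match e with
    | DEntry.uvar β κ => DEntry.uvar β κ
    | DEntry.tvar x A => DEntry.tvar x (Ty.subst τ α A)

/-- Context application `[Ω]Γ` of a (complete) context `Ω` to a context `Γ`
that it extends, producing a declarative context: solutions are substituted,
and existential declarations and markers are dropped. -/
def applyCtxCtx : ACtx → ACtx → DCtx
  | [], _ => []
  | CtxEntry.uvar α κ :: Ω, CtxEntry.uvar _ _ :: Γ =>
      DEntry.uvar α κ :: applyCtxCtx Ω Γ
  | CtxEntry.tvar x A :: Ω, CtxEntry.tvar _ _ :: Γ =>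
      DEntry.tvar x (applyCtx Ω A) :: applyCtxCtx Ω Γ
  | CtxEntry.eqn α τ :: Ω, CtxEntry.eqn _ _ :: Γ =>
      substDCtx (applyCtx Ω τ) α (applyCtxCtx Ω Γ)
  | CtxEntry.marker _ :: Ω, CtxEntry.marker _ :: Γ => applyCtxCtx Ω Γ
  | CtxEntry.solved _ _ _ :: Ω, CtxEntry.solved _ _ _ :: Γ => applyCtxCtx Ω Γ
  | CtxEntry.solved _ _ _ :: Ω, CtxEntry.evar _ _ :: Γ => applyCtxCtx Ω Γ
  | CtxEntry.solved _ _ _ :: Ω, Γ => applyCtxCtx Ω Γ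
  | CtxEntry.evar _ _ :: Ω, Γ => applyCtxCtx Ω Γ
  | _ :: Ω, Γ => applyCtxCtx Ω Γ

/-!
Both sides equal `[Ω]Ω` (stability). In computing `[Ω]Γ`, each solved entry of `Ω` is paired
with the next soft entry of `Γ`, which need not be the entry that `Γ ⟶ Ω` relates it to. So
stability is proved by induction on the extension with an arbitrary prefix of solved entries
in front of `Ω`: such a prefix absorbs soft entries of `Γ` that are solved further down, and is
skipped in front of a rigid entry.
-/

namespace CtxEntry

def IsSolved : CtxEntry → Prop
  | solved _ _ _ => True
  | _ => False

def IsRigid : CtxEntry → Prop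
  | evar _ _ => False
  | solved _ _ _ => False
  | _ => True

theorem isSolved_iff {e : CtxEntry} : e.IsSolved ↔ ∃ a κ τ, e = solved a κ τ := by
  cases e <;> simp [IsSolved]

end CtxEntry

theorem forall_isSolved_append_solved {S : ACtx} (hS : ∀ e ∈ S, e.IsSolved) (a : ℕ) (κ : Srt)
    (τ : Ty) : ∀ e ∈ S ++ [CtxEntry.solved a κ τ], e.IsSolved := by
  simp only [List.mem_append, List.mem_singleton]
  rintro e (he | rfl)
  exacts [hS e he, trivial]

theorem Complete.of_cons {e : CtxEntry} {Ω : ACtx} (h : Complete (e :: Ω)) : Complete Ω :=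
  fun a κ ha => h a κ (List.mem_cons_of_mem e ha)

theorem applyCtxCtx_solved_append {S : ACtx} (hS : ∀ e ∈ S, e.IsSolved) (Ω Γ : ACtx)
    (hΓ : ∀ e ∈ Γ.head?, e.IsRigid) : applyCtxCtx (S ++ Ω) Γ = applyCtxCtx Ω Γ := by
  induction S with
  | nil => rfl
  | cons s S ih =>
    obtain ⟨a, κ, τ, rfl⟩ := CtxEntry.isSolved_iff.mp (hS s List.mem_cons_self)
    rw [← ih fun e he => hS e (List.mem_cons_of_mem _ he)]
    rcases Γ with _ | ⟨e, Γ⟩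
    · rfl
    · cases e <;> simp_all [CtxEntry.IsRigid, applyCtxCtx]

theorem applyCtxCtx_solved_append_of_ctxExt {Γ Δ : ACtx} (h : CtxExt Γ Δ) (hΔ : Complete Δ)
    {S : ACtx} (hS : ∀ e ∈ S, e.IsSolved) : applyCtxCtx (S ++ Δ) Γ = applyCtxCtx Δ Δ := by
  induction h generalizing S with
  | nil => exact applyCtxCtx_solved_append hS [] [] (by simp)
  | tvar _ _ ih | uvar _ ih | eqn _ _ ih | marker _ ih =>
    rw [applyCtxCtx_solved_append hS _ _ (by simp [CtxEntry.IsRigid])]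
    have ih := ih hΔ.of_cons (S := []) (by simp)
    rw [List.nil_append] at ih
    simp [applyCtxCtx, ih]
  | evar | add => exact absurd List.mem_cons_self (hΔ _ _)
  | @solved Γ Δ a κ t t' _ _ ih | @solve Γ Δ a κ t' _ ih =>
    show _ = applyCtxCtx Δ Δ
    rcases S with _ | ⟨s, S⟩
    · exact ih hΔ.of_cons (S := []) (by simp)
    · obtain ⟨b, κ', τ, rfl⟩ := CtxEntry.isSolved_iff.mp (hS s List.mem_cons_self)
      have hS' := forall_isSolved_append_solved
        (fun e he => hS e (List.mem_cons_of_mem _ he)) a κ t'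
      simpa [applyCtxCtx] using ih hΔ.of_cons hS'
  | @addSolved Γ Δ a κ t _ ih =>
    show _ = applyCtxCtx Δ Δ
    simpa using ih hΔ.of_cons (forall_isSolved_append_solved hS a κ t)

theorem applyCtxCtx_of_ctxExt {Γ Ω : ACtx} (h : CtxExt Γ Ω) (hΩ : Complete Ω) :
    applyCtxCtx Ω Γ = applyCtxCtx Ω Ω :=
  applyCtxCtx_solved_append_of_ctxExt h hΩ (S := []) (by simp)

/-- **Confluence of completion**: if `Δ₁ ⟶ Ω` and `Δ₂ ⟶ Ω` where `Ω` is a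
complete context, then `[Ω]Δ₁ = [Ω]Δ₂`. -/
theorem completion_confluence (Δ₁ Δ₂ Ω : ACtx) (hΩ : Complete Ω)
    (h₁ : CtxExt Δ₁ Ω) (h₂ : CtxExt Δ₂ Ω) :
    applyCtxCtx Ω Δ₁ = applyCtxCtx Ω Δ₂ := by
  rw [applyCtxCtx_of_ctxExt h₁ hΩ, applyCtxCtx_of_ctxExt h₂ hΩ]
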